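/- Let Λ = ℕ × Γ with Γ countable, s₀, s₁ ∈ ℝ, 0 < p₀ < p₁ < ∞. Then the K-functional for the mixed-norm couple with q = ∞ commutes with the supremum over layers: K(t, f, ℓ̃^{s₀,∞}_{p₀}, ℓ̃^{s₁,∞}_{p₁}) ≍ sup_{j≥0} 2^{j(s₀+n/2−n/p₀)} K(t·2^{j s̃}, f_j, ℓ^{p₀}(Γ), ℓ^{p₁}(Γ)), where s̃ = s₁ − s₀ + n/p₀ − n/p₁ and f_j = (|f_{j,γ}|)_{γ∈Γ}. -/

import Mathlib

open Set ENNReal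

/-- `ℓ^p` quasi-norm (in `ℝ≥0∞`) of an `ℝ≥0∞`-valued sequence; supremum when `p = ∞`. -/
noncomputable def elp (p : ℝ≥0∞) {Γ : Type*} (g : Γ → ℝ≥0∞) : ℝ≥0∞ :=
  if p = ∞ then ⨆ γ, g γ else (∑' γ, g γ ^ p.toReal) ^ (1 / p.toReal)

/-- The mixed quasi-norm of `ℓ̃^{s,q}_p`:
`(Σ_j (2^{j(s+n/2-n/p)} ‖f_j‖_{ℓ^p(Γ)})^q)^{1/q}` (supremum when `q = ∞`). -/
noncomputable def mixedNorm (n : ℕ) (s : ℝ) (p q : ℝ≥0∞) {Γ : Type*}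
    (f : ℕ → Γ → ℝ≥0∞) : ℝ≥0∞ :=
  elp q (fun j : ℕ =>
    ENNReal.ofReal ((2:ℝ) ^ ((j:ℝ) * (s + (n:ℝ)/2 - (n:ℝ) / p.toReal))) * elp p (f j))

/-- K-functional of the mixed-norm couple. -/
noncomputable def Kmix (n : ℕ) (s₀ s₁ : ℝ) (p₀ p₁ q : ℝ≥0∞) {Γ : Type*}
    (t : ℝ≥0∞) (f : ℕ → Γ → ℝ≥0∞) : ℝ≥0∞ :=
  ⨅ (g : ℕ → Γ → ℝ≥0∞) (h : ℕ → Γ → ℝ≥0∞) (_ : f = g + h),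
    mixedNorm n s₀ p₀ q g + t * mixedNorm n s₁ p₁ q h

/-- Single-layer K-functional of `(ℓ^{p₀}(Γ), ℓ^{p₁}(Γ))`. -/
noncomputable def Klayer (p₀ p₁ : ℝ≥0∞) {Γ : Type*} (t : ℝ≥0∞) (fj : Γ → ℝ≥0∞) : ℝ≥0∞ :=
  ⨅ (g : Γ → ℝ≥0∞) (h : Γ → ℝ≥0∞) (_ : fj = g + h), elp p₀ g + t * elp p₁ h

lemma elp_top {Γ : Type*} (g : Γ → ℝ≥0∞) : elp ∞ g = ⨆ γ, g γ := by simp [elp]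

lemma mixedNorm_top (n : ℕ) (s : ℝ) (p : ℝ≥0∞) {Γ : Type*} (f : ℕ → Γ → ℝ≥0∞) :
    mixedNorm n s p ∞ f = ⨆ j : ℕ,
      ENNReal.ofReal ((2:ℝ) ^ ((j:ℝ) * (s + (n:ℝ)/2 - (n:ℝ) / p.toReal))) * elp p (f j) := by
  rw [mixedNorm, elp_top]

/-- For `q = ∞`, the K-functional of the mixed-norm couple commutes with the
supremum over layers:
`K(t,f,ℓ̃^{s₀,∞}_{p₀},ℓ̃^{s₁,∞}_{p₁}) ≍ sup_j 2^{j(s₀+n/2-n/p₀)} K(t·2^{js̃}, f_j, ℓ^{p₀}, ℓ^{p₁})`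
with `s̃ = s₁ - s₀ + n/p₀ - n/p₁`. -/
theorem stmt15 {Γ : Type*} [Countable Γ] (n : ℕ) (s₀ s₁ : ℝ) (p₀ p₁ : ℝ≥0∞)
    (hp₀ : 0 < p₀) (hp₀₁ : p₀ < p₁) (hp₁ : p₁ < ∞) :
    ∃ C : ℝ≥0∞, 0 < C ∧ C ≠ ∞ ∧ ∀ (f : ℕ → Γ → ℝ≥0∞) (t : ℝ≥0∞), 0 < t →
      Kmix n s₀ s₁ p₀ p₁ ∞ t f ≤
        C * (⨆ j : ℕ, ENNReal.ofReal ((2:ℝ) ^ ((j:ℝ) * (s₀ + (n:ℝ)/2 - (n:ℝ)/p₀.toReal))) *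
          Klayer p₀ p₁
            (t * ENNReal.ofReal ((2:ℝ) ^ ((j:ℝ) * (s₁ - s₀ + (n:ℝ)/p₀.toReal - (n:ℝ)/p₁.toReal))))
            (f j)) ∧
      (⨆ j : ℕ, ENNReal.ofReal ((2:ℝ) ^ ((j:ℝ) * (s₀ + (n:ℝ)/2 - (n:ℝ)/p₀.toReal))) *
          Klayer p₀ p₁
            (t * ENNReal.ofReal ((2:ℝ) ^ ((j:ℝ) * (s₁ - s₀ + (n:ℝ)/p₀.toReal - (n:ℝ)/p₁.toReal))))
            (f j)) ≤ C * Kmix n s₀ s₁ p₀ p₁ ∞ t f := by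
  refine ⟨2, by norm_num, by norm_num, fun f t ht => ?_⟩
  set A : ℕ → ℝ≥0∞ := fun j =>
    ENNReal.ofReal ((2:ℝ) ^ ((j:ℝ) * (s₀ + (n:ℝ)/2 - (n:ℝ)/p₀.toReal))) with hA
  set B : ℕ → ℝ≥0∞ := fun j =>
    ENNReal.ofReal ((2:ℝ) ^ ((j:ℝ) * (s₁ - s₀ + (n:ℝ)/p₀.toReal - (n:ℝ)/p₁.toReal))) with hB
  set Cc : ℕ → ℝ≥0∞ := fun j =>
    ENNReal.ofReal ((2:ℝ) ^ ((j:ℝ) * (s₁ + (n:ℝ)/2 - (n:ℝ)/p₁.toReal))) with hCc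
  have hAB : ∀ j, A j * B j = Cc j := by
    intro j
    rw [hA, hB, hCc]
    rw [← ENNReal.ofReal_mul (Real.rpow_nonneg (by norm_num) _),
      ← Real.rpow_add (by norm_num : (0:ℝ) < 2)]
    congr 1
    ring
  have hA0 : ∀ j, A j ≠ 0 := fun j =>
    (ENNReal.ofReal_pos.mpr (Real.rpow_pos_of_pos (by norm_num) _)).ne'
  have hAtop : ∀ j, A j ≠ ∞ := fun j => ENNReal.ofReal_ne_top
  set S : ℝ≥0∞ := ⨆ j : ℕ, A j * Klayer p₀ p₁ (t * B j) (f j) with hSdef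
  -- lower bound: S ≤ Kmix
  have hlow : S ≤ Kmix n s₀ s₁ p₀ p₁ ∞ t f := by
    refine iSup_le fun j => ?_
    refine le_iInf fun g => le_iInf fun h => le_iInf fun hf => ?_
    have hfj : f j = g j + h j := by rw [hf]; rfl
    have h1 : Klayer p₀ p₁ (t * B j) (f j) ≤ elp p₀ (g j) + (t * B j) * elp p₁ (h j) := by
      exact iInf_le_of_le (g j) (iInf_le_of_le (h j) (iInf_le_of_le hfj le_rfl))
    calc A j * Klayer p₀ p₁ (t * B j) (f j)
        ≤ A j * (elp p₀ (g j) + (t * B j) * elp p₁ (h j)) := mul_le_mul_right h1 _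
      _ = A j * elp p₀ (g j) + t * (Cc j * elp p₁ (h j)) := by
          rw [mul_add, ← hAB j]; ring
      _ ≤ mixedNorm n s₀ p₀ ∞ g + t * mixedNorm n s₁ p₁ ∞ h := by
          refine add_le_add ?_ (mul_le_mul_right ?_ t)
          · rw [mixedNorm_top]
            exact le_iSup (fun k => A k * elp p₀ (g k)) j
          · rw [mixedNorm_top]
            exact le_iSup (fun k => Cc k * elp p₁ (h k)) j
  -- upper bound: Kmix ≤ 2 * S
  have hup : Kmix n s₀ s₁ p₀ p₁ ∞ t f ≤ 2 * S := by
    rcases eq_or_ne S ∞ with hS | hS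
    · simp [hS]
    refine ENNReal.le_of_forall_pos_le_add fun ε hε h2S => ?_
    have hε2 : (0:ℝ≥0∞) < (ε:ℝ≥0∞) / 2 := by
      simp [ENNReal.div_pos_iff, hε.ne']
    have key : ∀ j : ℕ, ∃ g h : Γ → ℝ≥0∞, f j = g + h ∧
        A j * (elp p₀ g + (t * B j) * elp p₁ h) ≤ S + (ε:ℝ≥0∞) / 2 := by
      intro j
      have h1 : A j * Klayer p₀ p₁ (t * B j) (f j) < S + (ε:ℝ≥0∞) / 2 :=
        lt_of_le_of_lt (le_iSup (fun k => A k * Klayer p₀ p₁ (t * B k) (f k)) j)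
          (ENNReal.lt_add_right hS hε2.ne')
      have h2 : Klayer p₀ p₁ (t * B j) (f j) < (S + (ε:ℝ≥0∞) / 2) / A j := by
        rw [ENNReal.lt_div_iff_mul_lt (Or.inl (hA0 j)) (Or.inl (hAtop j)), mul_comm]
        exact h1
      rw [Klayer] at h2
      simp only [iInf_lt_iff] at h2
      obtain ⟨g, h, hfgh, hlt⟩ := h2
      refine ⟨g, h, hfgh, ?_⟩
      calc A j * (elp p₀ g + (t * B j) * elp p₁ h)
          ≤ A j * ((S + (ε:ℝ≥0∞) / 2) / A j) := mul_le_mul_right hlt.le _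
        _ = S + (ε:ℝ≥0∞) / 2 := ENNReal.mul_div_cancel (hA0 j) (hAtop j)
    choose G H hGH hle using key
    have hdec : f = G + H := funext fun j => hGH j
    have hK : Kmix n s₀ s₁ p₀ p₁ ∞ t f ≤
        mixedNorm n s₀ p₀ ∞ G + t * mixedNorm n s₁ p₁ ∞ H :=
      iInf_le_of_le G (iInf_le_of_le H (iInf_le_of_le hdec le_rfl))
    have hG : mixedNorm n s₀ p₀ ∞ G ≤ S + (ε:ℝ≥0∞) / 2 := by
      rw [mixedNorm_top]
      refine iSup_le fun j => le_trans ?_ (hle j)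
      exact mul_le_mul_right (le_add_right le_rfl) _
    have hH : t * mixedNorm n s₁ p₁ ∞ H ≤ S + (ε:ℝ≥0∞) / 2 := by
      rw [mixedNorm_top, ENNReal.mul_iSup]
      refine iSup_le fun j => le_trans ?_ (hle j)
      calc t * (Cc j * elp p₁ (H j)) = A j * ((t * B j) * elp p₁ (H j)) := by
            rw [← hAB j]; ring
        _ ≤ A j * (elp p₀ (G j) + (t * B j) * elp p₁ (H j)) :=
            mul_le_mul_right (le_add_left le_rfl) _
    calc Kmix n s₀ s₁ p₀ p₁ ∞ t f ≤ (S + (ε:ℝ≥0∞)/2) + (S + (ε:ℝ≥0∞)/2) :=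
          hK.trans (add_le_add hG hH)
      _ = 2 * S + ε := by
          rw [two_mul, add_add_add_comm, ENNReal.add_halves]
  exact ⟨hup, hlow.trans (le_mul_of_one_le_left zero_le one_le_two)⟩
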